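/- arXiv:1309.3981 — 3 statements merged into one kernel-verified Lean document; each statement's English description precedes it below -/
import Mathlib

section
/- Let φ be an automorphism of a group F and H a subgroup of F with φ^q(H) = H for some q ≥ 1, where H has finite index κ in F. If n is a positive integer such that φ^p(g)g^{-1} ∈ F^{κn} for all g ∈ F and some p ≥ 1 (i.e., φ has finite order modulo F^{κn}), then the restriction of φ^q to H (assumed to be an automorphism of H) induces an automorphism of finite order of H/H^n. -/
/-- If φ has finite order modulo F^{κn}, then its restriction to a normal subgroup H of
index κ (with F/H of exponent dividing κ) induces an automorphism of finite order of
H/H^n. -/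
theorem stmt4 (F : Type*) [Group F] (φ : MulAut F) (H : Subgroup F) (hnorm : H.Normal)
    (κ n q : ℕ) (hκ : H.index = κ) (hκpos : 1 ≤ κ) (hn : 1 ≤ n) (hq : 1 ≤ q)
    (hexpκ : ∀ g : F, g ^ κ ∈ H)
    (ψ : MulAut H) (hψ : ∀ h : H, (ψ h : F) = (φ ^ q) (h : F))
    (hp : ∃ p : ℕ, 1 ≤ p ∧ ∀ g : F,
      (φ ^ p) g * g⁻¹ ∈ Subgroup.closure {x : F | ∃ g' : F, x = g' ^ (κ * n)}) :
    ∃ m : ℕ, 1 ≤ m ∧ ∀ h : H,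
      (ψ ^ m) h * h⁻¹ ∈ Subgroup.closure {x : H | ∃ h' : H, x = h' ^ n} := by
  obtain ⟨p, hp1, hpmem⟩ := hp
  set K : Subgroup H := Subgroup.closure {x : H | ∃ h' : H, x = h' ^ n} with hK
  set M : Subgroup F := Subgroup.closure {x : F | ∃ g' : F, x = g' ^ (κ * n)} with hM
  -- M ≤ image of K in F
  have hMK : M ≤ K.map H.subtype := by
    rw [hM]
    apply Subgroup.closure_le _ |>.2
    rintro x ⟨g', rfl⟩
    refine ⟨(⟨g' ^ κ, hexpκ g'⟩ : H) ^ n, ?_, ?_⟩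
    · exact Subgroup.subset_closure ⟨⟨g' ^ κ, hexpκ g'⟩, rfl⟩
    · simp [pow_mul]
  -- φ^{p*k} g * g⁻¹ ∈ M for all k
  have hiter : ∀ k : ℕ, ∀ g : F, (φ ^ (p * k)) g * g⁻¹ ∈ M := by
    intro k
    induction k with
    | zero => intro g; simpa using one_mem M
    | succ k ih =>
      intro g
      have key : (φ ^ (p * (k + 1))) g * g⁻¹
          = ((φ ^ p) ((φ ^ (p * k)) g) * ((φ ^ (p * k)) g)⁻¹) * ((φ ^ (p * k)) g * g⁻¹) := by
        have : (φ ^ (p * (k + 1))) g = (φ ^ p) ((φ ^ (p * k)) g) := by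
          rw [← MulAut.mul_apply, ← pow_add]
          ring_nf
        rw [this]; group
      rw [key]
      exact mul_mem (hpmem _) (ih g)
  -- (ψ ^ k) h = φ^{q*k} h
  have hpow : ∀ k : ℕ, ∀ h : H, ((ψ ^ k) h : F) = (φ ^ (q * k)) (h : F) := by
    intro k
    induction k with
    | zero => intro h; simp
    | succ k ih =>
      intro h
      have : (ψ ^ (k + 1)) h = ψ ((ψ ^ k) h) := by
        rw [← MulAut.mul_apply, ← pow_succ']
      rw [this, hψ, ih, ← MulAut.mul_apply, ← pow_add]
      ring_nf
  refine ⟨p, hp1, fun h => ?_⟩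
  have hFmem : ((((ψ ^ p) h * h⁻¹ : H)) : F) ∈ M := by
    push_cast
    rw [hpow p h]
    have := hiter q (h : F)
    rwa [mul_comm p q] at this
  obtain ⟨y, hy, hyeq⟩ := hMK hFmem
  have : y = (ψ ^ p) h * h⁻¹ := Subtype.ext hyeq
  rwa [this] at hy
end

section
/- Let σ be a substitution on a finite alphabet A with non-erasing images (σ(b) ≠ ε for all b ∈ A), and a ∈ A with σ(a) = a·w, w ≠ ε. Suppose the infinite fixed word σ^∞(a) = a·w·σ(w)·σ²(w)⋯ equals u^∞ for some non-empty primitive word u. Then there exists an integer q ≥ 1 with σ(u) = u^q; moreover, if a is a prefix of u and σ strictly increases the length of u, then q ≥ 2. -/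
private lemma list_prefix_append_left {α : Type*} (z : List α) {x y : List α}
    (h : x <+: y) : z ++ x <+: z ++ y := by
  obtain ⟨t, rfl⟩ := h
  exact ⟨t, by rw [List.append_assoc]⟩

private lemma fm_length_pow {α : Type*} (u : FreeMonoid α) (n : ℕ) :
    (u ^ n).length = n * u.length := by
  induction n with
  | zero => simp [FreeMonoid.length_one]
  | succ n ih => rw [pow_succ, FreeMonoid.length_mul, ih]; ring

private lemma fm_of_prefix {α : Type*} {u v : FreeMonoid α}
    (h : u.toList <+: v.toList) : ∃ t : FreeMonoid α, v = u * t := by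
  obtain ⟨s, hs⟩ := h
  exact ⟨FreeMonoid.ofList s, FreeMonoid.toList.injective (by
    rw [FreeMonoid.toList_mul]; exact hs.symm)⟩

private lemma fm_pow_prefix {α : Type*} (u : FreeMonoid α) {k m : ℕ} (h : k ≤ m) :
    (u ^ k).toList <+: (u ^ m).toList := by
  obtain ⟨d, rfl⟩ := Nat.exists_eq_add_of_le h
  rw [pow_add, FreeMonoid.toList_mul]
  exact List.prefix_append _ _

private lemma fm_comm_pow {α : Type*} (n : ℕ) :
    ∀ u v : FreeMonoid α, u.length + v.length ≤ n → u * v = v * u →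
      ∃ (z : FreeMonoid α) (k l : ℕ), u = z ^ k ∧ v = z ^ l := by
  induction n with
  | zero =>
    intro u v hlen _
    have hu : u = 1 := FreeMonoid.length_eq_zero.mp (by omega)
    have hv : v = 1 := FreeMonoid.length_eq_zero.mp (by omega)
    exact ⟨1, 0, 0, by simp [hu], by simp [hv]⟩
  | succ n ih =>
    intro u v hlen hc
    by_cases hu : u = 1
    · exact ⟨v, 0, 1, by simp [hu], by simp⟩
    by_cases hv : v = 1
    · exact ⟨u, 1, 0, by simp, by simp [hv]⟩
    have hu1 : 1 ≤ u.length :=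
      Nat.one_le_iff_ne_zero.mpr (fun h => hu (FreeMonoid.length_eq_zero.mp h))
    have hv1 : 1 ≤ v.length :=
      Nat.one_le_iff_ne_zero.mpr (fun h => hv (FreeMonoid.length_eq_zero.mp h))
    rcases le_total u.length v.length with hle | hle
    · -- u is a prefix of v
      have hA : u.toList <+: (u * v).toList := ⟨v.toList, rfl⟩
      have hB : v.toList <+: (u * v).toList := by
        rw [hc]; exact ⟨u.toList, rfl⟩
      have hpre : u.toList <+: v.toList :=
        List.prefix_of_prefix_length_le hA hB hle
      obtain ⟨v', rfl⟩ := fm_of_prefix hpre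
      have hc' : u * v' = v' * u :=
        mul_left_cancel (hc.trans (mul_assoc u v' u))
      obtain ⟨z, k, l, hz1, hz2⟩ := ih u v'
        (by rw [FreeMonoid.length_mul] at hlen; omega) hc'
      exact ⟨z, k, k + l, hz1, by rw [hz1, hz2, ← pow_add]⟩
    · -- v is a prefix of u
      have hA : v.toList <+: (v * u).toList := ⟨u.toList, rfl⟩
      have hB : u.toList <+: (v * u).toList := by
        rw [← hc]; exact ⟨v.toList, rfl⟩
      have hpre : v.toList <+: u.toList :=
        List.prefix_of_prefix_length_le hA hB hle
      obtain ⟨u', rfl⟩ := fm_of_prefix hpre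
      have hc' : v * u' = u' * v :=
        mul_left_cancel (hc.symm.trans (mul_assoc v u' v))
      obtain ⟨z, k, l, hz1, hz2⟩ := ih v u'
        (by rw [FreeMonoid.length_mul] at hlen; omega) hc'
      exact ⟨z, k + l, k, by rw [hz1, hz2, ← pow_add], hz1⟩

/-- If the infinite fixed word σ^∞(a) is periodic, equal to u^∞ for a primitive word u,
then σ(u) = u^q for some q ≥ 1; and q ≥ 2 if a is a prefix of u and σ strictly
increases the length of u. -/
theorem stmt9 (A : Type*) [Fintype A] (σ : Monoid.End (FreeMonoid A))
    (hne : ∀ b : A, σ (FreeMonoid.of b) ≠ 1)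
    (a : A) (w : FreeMonoid A) (hw : w ≠ 1)
    (hσa : σ (FreeMonoid.of a) = FreeMonoid.of a * w)
    (u : FreeMonoid A) (hu : u ≠ 1)
    (hprim : ∀ (v : FreeMonoid A) (k : ℕ), u = v ^ k → k = 1)
    (hperiodic : ∀ p : ℕ, ∃ m : ℕ,
      ((σ ^ p) (FreeMonoid.of a)).toList <+: (u ^ m).toList) :
    ∃ q : ℕ, 1 ≤ q ∧ σ u = u ^ q ∧
      ((FreeMonoid.of a).toList <+: u.toList →
        u.toList.length < (σ u).toList.length → 2 ≤ q) := by
  -- σ does not decrease lengths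
  have hlen_le : ∀ x : FreeMonoid A, x.length ≤ (σ x).length := by
    have key : ∀ l : List A,
        (FreeMonoid.ofList l).length ≤ (σ (FreeMonoid.ofList l)).length := by
      intro l
      induction l with
      | nil => simp [FreeMonoid.ofList_nil]
      | cons b t iht =>
        rw [FreeMonoid.ofList_cons, map_mul, FreeMonoid.length_mul,
          FreeMonoid.length_mul, FreeMonoid.length_of]
        have hb : 1 ≤ (σ (FreeMonoid.of b)).length :=
          Nat.one_le_iff_ne_zero.mpr
            (fun h => hne b (FreeMonoid.length_eq_zero.mp h))
        omega
    intro x; exact key x.toList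
  have hne' : ∀ x : FreeMonoid A, x ≠ 1 → σ x ≠ 1 := by
    intro x hx h1
    have h0 : 1 ≤ x.length :=
      Nat.one_le_iff_ne_zero.mpr (fun h => hx (FreeMonoid.length_eq_zero.mp h))
    have := hlen_le x
    rw [h1, FreeMonoid.length_one] at this
    omega
  have hpow_ne : ∀ (p : ℕ) (x : FreeMonoid A), x ≠ 1 → (σ ^ p) x ≠ 1 := by
    intro p
    induction p with
    | zero => intro x hx; simpa using hx
    | succ p ihp =>
      intro x hx
      rw [pow_succ]
      exact ihp _ (hne' x hx)
  -- σ preserves prefixes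
  have hpre_σ : ∀ x y : FreeMonoid A, x.toList <+: y.toList →
      (σ x).toList <+: (σ y).toList := by
    intro x y h
    obtain ⟨t, rfl⟩ := fm_of_prefix h
    rw [map_mul, FreeMonoid.toList_mul]
    exact List.prefix_append _ _
  -- the iterates grow and nest
  set ap : ℕ → FreeMonoid A := fun p => (σ ^ p) (FreeMonoid.of a) with hap
  have hstep : ∀ p, ap (p + 1) = ap p * (σ ^ p) w := by
    intro p
    show (σ ^ (p + 1)) (FreeMonoid.of a) = _
    rw [pow_succ]
    show (σ ^ p) (σ (FreeMonoid.of a)) = _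
    rw [hσa, map_mul]
  have hgrow : ∀ p, p + 1 ≤ (ap p).length := by
    intro p
    induction p with
    | zero => simp [hap, FreeMonoid.length_of]
    | succ p ihp =>
      rw [hstep p, FreeMonoid.length_mul]
      have hne1 : (σ ^ p) w ≠ 1 := hpow_ne p w hw
      have h1 : 1 ≤ ((σ ^ p) w).length :=
        Nat.one_le_iff_ne_zero.mpr
          (fun h => hne1 (FreeMonoid.length_eq_zero.mp h))
      omega
  have hu1 : 1 ≤ u.length :=
    Nat.one_le_iff_ne_zero.mpr (fun h => hu (FreeMonoid.length_eq_zero.mp h))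
  -- key: every power of σ u is a prefix of some power of u
  have hkey : ∀ k : ℕ, ∃ m : ℕ, ((σ u) ^ k).toList <+: (u ^ m).toList := by
    intro k
    set p := k * u.length with hp
    obtain ⟨m, hm⟩ := hperiodic p
    -- u ^ k is a prefix of ap p
    have hlenk : (u ^ k).length ≤ (ap p).length := by
      rw [fm_length_pow]
      have := hgrow p
      omega
    have h1 : (u ^ k).toList <+: (u ^ max m k).toList :=
      fm_pow_prefix u (le_max_right _ _)
    have h2 : (ap p).toList <+: (u ^ max m k).toList :=
      hm.trans (fm_pow_prefix u (le_max_left _ _))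
    have huk : (u ^ k).toList <+: (ap p).toList :=
      List.prefix_of_prefix_length_le h1 h2 hlenk
    have hσuk := hpre_σ _ _ huk
    rw [map_pow] at hσuk
    obtain ⟨m', hm'⟩ := hperiodic (p + 1)
    have hσap : (σ (ap p)).toList <+: (u ^ m').toList := by
      have heq : σ (ap p) = ap (p + 1) := by
        show σ ((σ ^ p) (FreeMonoid.of a)) = (σ ^ (p + 1)) (FreeMonoid.of a)
        rw [pow_succ']
        rfl
      rw [heq]; exact hm'
    exact ⟨m', hσuk.trans hσap⟩
  -- u and σ u commute
  set v := σ u with hvdef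
  have hvne : v ≠ 1 := hne' u hu
  have hv1 : 1 ≤ v.length :=
    Nat.one_le_iff_ne_zero.mpr (fun h => hvne (FreeMonoid.length_eq_zero.mp h))
  have huv : u.length ≤ v.length := hlen_le u
  obtain ⟨m, hm2⟩ := hkey 2
  have hvv : (v * v).toList <+: (u ^ (m + 2)).toList := by
    rw [sq] at hm2
    exact hm2.trans (fm_pow_prefix u (by omega))
  have hup : u.toList <+: (u ^ (m + 2)).toList := by
    have := fm_pow_prefix u (show 1 ≤ m + 2 by omega)
    rwa [pow_one] at this
  have hvp : v.toList <+: (u ^ (m + 2)).toList := by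
    refine List.IsPrefix.trans ?_ hvv
    rw [FreeMonoid.toList_mul]
    exact List.prefix_append _ _
  have huvpre : u.toList <+: v.toList :=
    List.prefix_of_prefix_length_le hup hvp huv
  -- u*v and v*u are both prefixes of u^(m+3), with equal lengths
  have h_uv : (u * v).toList <+: (u ^ (m + 3)).toList := by
    have : (u ^ (m + 3) : FreeMonoid A) = u * u ^ (m + 2) := by
      rw [← pow_succ']
    rw [this, FreeMonoid.toList_mul, FreeMonoid.toList_mul]
    exact list_prefix_append_left u.toList hvp
  have h_vu : (v * u).toList <+: (u ^ (m + 3)).toList := by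
    have hstep1 : (v * u).toList <+: (v * v).toList := by
      rw [FreeMonoid.toList_mul, FreeMonoid.toList_mul]
      exact list_prefix_append_left v.toList huvpre
    exact (hstep1.trans hvv).trans (fm_pow_prefix u (by omega))
  have hcomm : u * v = v * u := by
    have hlen_uv : (u * v).toList.length = (v * u).toList.length := by
      rw [show ((u:FreeMonoid A) * v).toList.length = (u * v).length from rfl,
        show ((v:FreeMonoid A) * u).toList.length = (v * u).length from rfl,
        FreeMonoid.length_mul, FreeMonoid.length_mul]
      omega
    have h1 : (u * v).toList <+: (v * u).toList :=
      List.prefix_of_prefix_length_le h_uv h_vu (le_of_eq hlen_uv)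
    exact FreeMonoid.toList.injective (h1.eq_of_length hlen_uv)
  obtain ⟨z, k, l, hz1, hz2⟩ :=
    fm_comm_pow (u.length + v.length) u v (le_refl _) hcomm
  have hk1 : k = 1 := hprim z k hz1
  subst hk1
  rw [pow_one] at hz1
  subst hz1
  -- v = u ^ l
  have hl1 : 1 ≤ l := by
    by_contra h
    have hl0 : l = 0 := by omega
    subst hl0
    rw [pow_zero] at hz2
    exact hvne hz2
  refine ⟨l, hl1, hz2, ?_⟩
  intro _ hlt
  rw [hz2] at hlt
  rw [show ((u:FreeMonoid A) ^ l).toList.length = (u ^ l).length from rfl,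
    show (u:FreeMonoid A).toList.length = u.length from rfl, fm_length_pow] at hlt
  by_contra h
  have hl1' : l = 1 := by omega
  subst hl1'
  omega
end

section
/- Let A be a finite alphabet and m ≥ 1. Suppose w is a finite word over A such that w contains no m-th power. Then for any non-empty word v and any occurrence pattern, w cannot contain v^m as a factor; in particular if a word β over A ⊔ B (a larger alphabet) has the property that deleting all letters from B yields w, and β contains a factor γ^{m+2} where γ contains at least one letter of A, then w contains an m-th power — a contradiction. Hence every factor of β of the form γ^{m+2} consists only of letters from B. -/
/-!
If `γ` contains a letter of `A`, its red projection `v` is a non-empty word, and deleting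
the `B`-letters from `γ^{m+2}` gives `v^{m+2}`. Since deleting letters preserves factors,
`v^m` is then a factor of the red projection of `β`, contradicting the hypothesis.
-/

namespace List

variable {α β : Type*}

theorem replicate_prefix_replicate_of_le (a : α) {m n : ℕ} (h : m ≤ n) :
    replicate m a <+: replicate n a :=
  prefix_replicate_iff.2 (by simpa using h)

theorem filterMap_flatten_replicate (f : α → Option β) (n : ℕ) (l : List α) :
    (replicate n l).flatten.filterMap f = (replicate n (l.filterMap f)).flatten := by
  rw [filterMap_flatten, map_replicate]

end List

theorem stmt15_general (A B : Type*) (m : ℕ)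
    (β : List (A ⊕ B))
    (hred : ∀ v : List A, v ≠ [] →
      ¬ (List.replicate m v).flatten <:+: β.filterMap (Sum.elim some fun _ => none))
    (γ : List (A ⊕ B)) (hγ : (List.replicate (m + 2) γ).flatten <:+: β) :
    ∀ e ∈ γ, ∃ b : B, e = Sum.inr b := by
  rintro (a | b) he
  · set red : A ⊕ B → Option A := Sum.elim some fun _ => none
    have hv : γ.filterMap red ≠ [] :=
      List.ne_nil_of_mem (List.mem_filterMap.2 ⟨Sum.inl a, he, rfl⟩)
    have hpow : (List.replicate (m + 2) (γ.filterMap red)).flatten <:+: β.filterMap red := by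
      rw [← List.filterMap_flatten_replicate]
      exact hγ.filterMap red
    have hprefix := (List.replicate_prefix_replicate_of_le (γ.filterMap red)
      (Nat.le_add_right m 2)).flatten
    exact absurd (hprefix.isInfix.trans hpow) (hred _ hv)
  · exact ⟨b, rfl⟩

/-- If the red projection of β contains no m-th power, then any factor of β of the form
γ^{m+2} consists only of yellow letters. -/
theorem stmt15 (A B : Type*) [Fintype A] [Fintype B] (m : ℕ) (hm : 1 ≤ m)
    (β : List (A ⊕ B))
    (hred : ∀ v : List A, v ≠ [] →
      ¬ (List.replicate m v).flatten <:+: β.filterMap (Sum.elim some fun _ => none))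
    (γ : List (A ⊕ B)) (hγ : (List.replicate (m + 2) γ).flatten <:+: β) :
    ∀ e ∈ γ, ∃ b : B, e = Sum.inr b :=
  stmt15_general A B m β hred γ hγ
end
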